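/- arXiv:2310.03447 — 2 statements merged into one kernel-verified Lean document; each statement's English description precedes it below -/
import Mathlib

section
/- The exponential mechanism, which on input D selects q ∈ Q with probability proportional to exp((ε/(2Δ))·u(q;D)), where Δ = max_q of the L1 sensitivity of u(q;·), satisfies ε²/8-zCDP. -/
/-! The privacy loss `X = log (p D / p D')`, as a random variable under `p D`, takes values in an
interval of length `ε`: the normalising constants only shift it. Moreover `E[exp (-X)] = 1`, and
the Rényi sum of order `α` is `E[exp ((α - 1) X)]`. Hoeffding's lemma bounds `log E[exp (t X)]` by
`t E[X] + ε² t² / 8`; at `t = -1` this gives `E[X] ≤ ε² / 8`, and then at `t = α - 1` it gives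
`log E[exp ((α - 1) X)] ≤ (ε² / 8) α (α - 1)`. -/

open Real Set MeasureTheory ProbabilityTheory

namespace ProbabilityTheory

variable {Ω : Type*} [MeasurableSpace Ω] {μ : Measure Ω} [IsProbabilityMeasure μ] {X : Ω → ℝ}
  {a b : ℝ}

lemma mgf_le_exp_of_mem_Icc (hm : AEMeasurable X μ) (hb : ∀ᵐ ω ∂μ, X ω ∈ Icc a b) (t : ℝ) :
    mgf X μ t ≤ exp (t * μ[X] + (b - a) ^ 2 / 8 * t ^ 2) := by
  have hcentered := (hasSubgaussianMGF_of_mem_Icc hm hb).mgf_le t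
  have hshift : mgf X μ t = mgf (fun ω ↦ X ω - μ[X]) μ t * exp (t * μ[X]) := by
    simp_rw [sub_eq_add_neg, mgf_add_const, mul_assoc, ← exp_add, mul_neg, neg_add_cancel,
      exp_zero, mul_one]
  rw [hshift, add_comm, exp_add]
  gcongr
  refine hcentered.trans_eq (congrArg exp ?_)
  rw [NNReal.coe_pow, NNReal.coe_div, NNReal.coe_ofNat, coe_nnnorm, Real.norm_eq_abs, div_pow,
    sq_abs]
  ring

lemma mgf_le_of_mem_Icc_of_mgf_neg_one (hm : AEMeasurable X μ) (hb : ∀ᵐ ω ∂μ, X ω ∈ Icc a b)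
    (h1 : mgf X μ (-1) = 1) {t : ℝ} (ht : 0 ≤ t) :
    mgf X μ t ≤ exp ((b - a) ^ 2 / 8 * (t * (t + 1))) := by
  have hmean : μ[X] ≤ (b - a) ^ 2 / 8 := by
    have := mgf_le_exp_of_mem_Icc hm hb (-1)
    rw [h1, one_le_exp_iff] at this
    linarith
  calc mgf X μ t ≤ exp (t * μ[X] + (b - a) ^ 2 / 8 * t ^ 2) := mgf_le_exp_of_mem_Icc hm hb t
    _ ≤ exp ((b - a) ^ 2 / 8 * (t * (t + 1))) := by
      gcongr
      nlinarith [mul_le_mul_of_nonneg_left hmean ht]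

end ProbabilityTheory

lemma rpow_mul_rpow_one_sub_eq {x y : ℝ} (hx : 0 < x) (hy : 0 < y) (α : ℝ) :
    x ^ α * y ^ (1 - α) = x * (x / y) ^ (α - 1) := by
  have hxα : x ^ α = x * x ^ (α - 1) := by simpa using rpow_add hx 1 (α - 1)
  rw [div_rpow hx.le hy.le, show 1 - α = -(α - 1) by ring, rpow_neg hy.le, hxα, mul_assoc,
    div_eq_mul_inv]

noncomputable def renyiDiv {Q : Type*} [Fintype Q] (α : ℝ) (P P' : Q → ℝ) : ℝ :=
  (α - 1)⁻¹ * log (∑ q, P q ^ α * P' q ^ (1 - α))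

lemma renyiDiv_le_of_log_div_mem_Icc {Q : Type*} [Fintype Q] {P P' : Q → ℝ}
    (hP : ∀ q, 0 < P q) (hP' : ∀ q, 0 < P' q) (hP1 : ∑ q, P q = 1) (hP'1 : ∑ q, P' q = 1)
    {a b : ℝ} (hab : ∀ q, log (P q / P' q) ∈ Icc a b) {α : ℝ} (hα : 1 < α) :
    renyiDiv α P P' ≤ (b - a) ^ 2 / 8 * α := by
  let : MeasurableSpace Q := ⊤
  have hsum : ∑ q, ENNReal.ofReal (P q) = 1 := by
    rw [← ENNReal.ofReal_sum_of_nonneg fun q _ ↦ (hP q).le, hP1, ENNReal.ofReal_one]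
  set μ := (PMF.ofFintype _ hsum).toMeasure
  set X : Q → ℝ := fun q ↦ log (P q / P' q)
  have hmgf (t : ℝ) : mgf X μ t = ∑ q, P q * (P q / P' q) ^ t := by
    rw [mgf, PMF.integral_eq_sum]
    refine Finset.sum_congr rfl fun q _ ↦ ?_
    rw [PMF.ofFintype_apply, ENNReal.toReal_ofReal (hP q).le, smul_eq_mul,
      rpow_def_of_pos (div_pos (hP q) (hP' q)), mul_comm t]
  have hmgf_neg_one : mgf X μ (-1) = 1 := by
    rw [hmgf]
    refine (Finset.sum_congr rfl fun q _ ↦ ?_).trans hP'1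
    rw [rpow_neg_one, inv_div, mul_div_cancel₀ _ (hP q).ne']
  have hbound := mgf_le_of_mem_Icc_of_mgf_neg_one Measurable.of_discrete.aemeasurable
    (ae_of_all _ hab) hmgf_neg_one (sub_nonneg.2 hα.le)
  rw [hmgf, sub_add_cancel,
    ← Finset.sum_congr rfl fun q _ ↦ rpow_mul_rpow_one_sub_eq (hP q) (hP' q) α] at hbound
  have hpos : 0 < ∑ q, P q ^ α * P' q ^ (1 - α) := Finset.sum_pos
    (fun q _ ↦ mul_pos (rpow_pos_of_pos (hP q) α) (rpow_pos_of_pos (hP' q) _))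
    (Finset.nonempty_of_sum_ne_zero (hP1 ▸ one_ne_zero))
  rw [← log_le_iff_le_exp hpos] at hbound
  rw [renyiDiv, inv_mul_le_iff₀ (sub_pos.2 hα)]
  linarith

noncomputable def softmax {Q : Type*} [Fintype Q] (f : Q → ℝ) (q : Q) : ℝ :=
  exp (f q) / ∑ r, exp (f r)

section Softmax

variable {Q : Type*} [Fintype Q]

lemma sum_exp_pos [Nonempty Q] (f : Q → ℝ) : 0 < ∑ r, exp (f r) :=
  Finset.sum_pos (fun r _ ↦ exp_pos (f r)) Finset.univ_nonempty

lemma softmax_pos [Nonempty Q] (f : Q → ℝ) (q : Q) : 0 < softmax f q :=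
  div_pos (exp_pos _) (sum_exp_pos f)

lemma sum_softmax [Nonempty Q] (f : Q → ℝ) : ∑ q, softmax f q = 1 := by
  simp_rw [softmax, ← Finset.sum_div, div_self (sum_exp_pos f).ne']

lemma log_softmax_div_softmax (f g : Q → ℝ) (q : Q) :
    log (softmax f q / softmax g q) = f q - g q + log ((∑ r, exp (g r)) / ∑ r, exp (f r)) := by
  have : Nonempty Q := ⟨q⟩
  rw [softmax, softmax, div_div_div_comm, ← exp_sub, div_div_eq_mul_div, mul_div_assoc,
    log_mul (exp_pos _).ne' (div_pos (sum_exp_pos g) (sum_exp_pos f)).ne', log_exp]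

lemma log_softmax_div_softmax_mem_Icc {f g : Q → ℝ} {δ : ℝ} (h : ∀ q, |f q - g q| ≤ δ) (q : Q) :
    log (softmax f q / softmax g q) ∈
      Icc (log ((∑ r, exp (g r)) / ∑ r, exp (f r)) - δ)
        (log ((∑ r, exp (g r)) / ∑ r, exp (f r)) + δ) := by
  rw [log_softmax_div_softmax]
  constructor <;> linarith [abs_le.1 (h q)]

end Softmax

lemma abs_mul_div_sub_mul_div_le {x y ε Δ : ℝ} (h : |x - y| ≤ Δ) :
    |ε * x / (2 * Δ) - ε * y / (2 * Δ)| ≤ |ε| / 2 := by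
  have hΔ : 0 ≤ Δ := (abs_nonneg _).trans h
  calc |ε * x / (2 * Δ) - ε * y / (2 * Δ)| = |ε| / 2 * (|x - y| / Δ) := by
        rw [← sub_div, ← mul_sub, abs_div, abs_mul, abs_of_nonneg (by positivity : 0 ≤ 2 * Δ)]
        ring
    _ ≤ |ε| / 2 * 1 := by gcongr; exact div_le_one_of_le₀ h hΔ
    _ = |ε| / 2 := mul_one _

theorem exponential_mechanism_zCDP_general {Dset Q : Type*} [Fintype Q] [Nonempty Q]
    (adj : Dset → Dset → Prop) (u : Q → Dset → ℝ) (ε Δ : ℝ)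
    (hsens : ∀ q D D', adj D D' → |u q D - u q D'| ≤ Δ)
    (p : Dset → Q → ℝ)
    (hp : ∀ D q, p D q =
      Real.exp (ε * u q D / (2 * Δ)) / ∑ r, Real.exp (ε * u r D / (2 * Δ))) :
    ∀ D D', adj D D' → ∀ α : ℝ, 1 < α →
      (α - 1)⁻¹ * Real.log (∑ q, p D q ^ α * p D' q ^ (1 - α)) ≤ (ε ^ 2 / 8) * α := by
  obtain rfl : p = fun D ↦ softmax fun q ↦ ε * u q D / (2 * Δ) := funext₂ hp
  intro D D' hadj α hα
  have hrange := log_softmax_div_softmax_mem_Icc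
    (fun q ↦ abs_mul_div_sub_mul_div_le (ε := ε) (hsens q D D' hadj))
  have hrenyi := renyiDiv_le_of_log_div_mem_Icc (softmax_pos _) (softmax_pos _)
    (sum_softmax _) (sum_softmax _) hrange hα
  rwa [add_sub_sub_cancel, add_halves, sq_abs] at hrenyi

/-- The exponential mechanism, which on input `D` selects `q ∈ Q` with probability
proportional to `exp((ε/(2Δ))·u(q;D))`, where `Δ = max_q` of the L1 sensitivity of `u(q;·)`,
satisfies `ε²/8`-zCDP: for all neighboring `D, D′` and `α > 1`, the Rényi divergence of
order `α` between the output distributions is at most `(ε²/8)·α`. -/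
theorem exponential_mechanism_zCDP {Dset Q : Type*} [Fintype Q] [Nonempty Q]
    (adj : Dset → Dset → Prop) (u : Q → Dset → ℝ) (ε Δ : ℝ) (hε : 0 < ε) (hΔ : 0 < Δ)
    (hsens : ∀ q D D', adj D D' → |u q D - u q D'| ≤ Δ)
    (p : Dset → Q → ℝ)
    (hp : ∀ D q, p D q =
      Real.exp (ε * u q D / (2 * Δ)) / ∑ r, Real.exp (ε * u r D / (2 * Δ))) :
    ∀ D D', adj D D' → ∀ α : ℝ, 1 < α →
      (α - 1)⁻¹ * Real.log (∑ q, p D q ^ α * p D' q ^ (1 - α)) ≤ (ε ^ 2 / 8) * α :=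
  exponential_mechanism_zCDP_general adj u ε Δ hsens p hp
end

section
/- The augmented FLAIM utility score u(q;D_k) = w_q·(‖M_q(D_k) − M_q(D̂)‖₁ − c_q − τ̃_k(q)), where τ̃_k(q) = (1/|q|)·Σ_{j∈q} ‖M_{{j}}(D_k) − m_j‖₁ for fixed vectors m_j and the reference D̂ fixed, has L1 sensitivity at most 2·max_q w_q with respect to example-level changes in D_k. -/
/-- The marginal query `M_q` counting records of `D` matching each value of `A_q`. -/
noncomputable def marginal {d : ℕ} {A : Fin d → Type*} [∀ i, Fintype (A i)]
    [∀ i, DecidableEq (A i)] (q : Finset (Fin d)) (D : Multiset (∀ i, A i))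
    (a : ∀ i : {i // i ∈ q}, A i.1) : ℝ :=
  (D.filter (fun x => ∀ i : {i // i ∈ q}, x i.1 = a i)).card

/-- The 1-way marginal for feature `j`. -/
noncomputable def marginal1 {d : ℕ} {A : Fin d → Type*} [∀ i, DecidableEq (A i)]
    (j : Fin d) (D : Multiset (∀ i, A i)) (a : A j) : ℝ :=
  (D.filter (fun x => x j = a)).card

/-! Adding a record `x` raises exactly one cell of each marginal, the cell of `x`, by one.
Hence every L1 distance `‖M(D) − v‖₁` to a fixed vector moves by at most one, so does the
average `τ̃` of such distances, and `u`, which is `w_q` times the difference of two such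
quantities up to a constant, moves by at most `2 w_q`. -/

open Finset

lemma abs_sum_abs_sub_sub_sum_abs_sub_le {ι α : Type*} [AddCommGroup α] [LinearOrder α]
    [IsOrderedAddMonoid α] (s : Finset ι) (f g v : ι → α) :
    |(∑ i ∈ s, |f i - v i|) - (∑ i ∈ s, |g i - v i|)| ≤ ∑ i ∈ s, |f i - g i| := by
  rw [← sum_sub_distrib]
  refine (abs_sum_le_sum_abs _ _).trans (sum_le_sum fun i _ => ?_)
  simpa using abs_abs_sub_abs_le_abs_sub (f i - v i) (g i - v i)

lemma abs_inv_card_mul_sum_sub_le {ι : Type*} (s : Finset ι) {f g : ι → ℝ} {b : ℝ}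
    (hb : 0 ≤ b) (h : ∀ i ∈ s, |f i - g i| ≤ b) :
    |(#s : ℝ)⁻¹ * ∑ i ∈ s, f i - (#s : ℝ)⁻¹ * ∑ i ∈ s, g i| ≤ b := by
  rcases s.eq_empty_or_nonempty with rfl | hs
  · simpa using hb
  have hcard : (0 : ℝ) < #s := by exact_mod_cast hs.card_pos
  rw [← mul_sub, ← sum_sub_distrib, abs_mul, abs_inv, abs_of_pos hcard,
    inv_mul_le_iff₀ hcard]
  calc |∑ i ∈ s, (f i - g i)| ≤ ∑ i ∈ s, |f i - g i| := abs_sum_le_sum_abs _ _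
    _ ≤ ∑ _i ∈ s, b := sum_le_sum h
    _ = #s * b := by rw [sum_const, nsmul_eq_mul]

section Marginals

variable {d : ℕ} {A : Fin d → Type*} [∀ i, DecidableEq (A i)]

lemma marginal_cons [∀ i, Fintype (A i)] (q : Finset (Fin d)) (D : Multiset (∀ i, A i))
    (x : ∀ i, A i) (a : ∀ i : {i // i ∈ q}, A i.1) :
    marginal q (x ::ₘ D) a = marginal q D a + if (fun i : {i // i ∈ q} => x i.1) = a then 1 else 0 := by
  simp only [marginal, ← Multiset.countP_eq_card_filter, Multiset.countP_cons, funext_iff]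
  split_ifs <;> simp

lemma marginal1_cons (j : Fin d) (D : Multiset (∀ i, A i)) (x : ∀ i, A i) (a : A j) :
    marginal1 j (x ::ₘ D) a = marginal1 j D a + if x j = a then 1 else 0 := by
  simp only [marginal1, ← Multiset.countP_eq_card_filter, Multiset.countP_cons]
  split_ifs <;> simp

lemma abs_sum_abs_marginal_cons_sub_le [∀ i, Fintype (A i)] (q : Finset (Fin d))
    (D : Multiset (∀ i, A i)) (x : ∀ i, A i) (v : (∀ i : {i // i ∈ q}, A i.1) → ℝ) :
    |(∑ a, |marginal q (x ::ₘ D) a - v a|) - (∑ a, |marginal q D a - v a|)| ≤ 1 := by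
  refine (abs_sum_abs_sub_sub_sum_abs_sub_le _ _ _ v).trans_eq ?_
  simp [marginal_cons, apply_ite abs]

lemma abs_sum_abs_marginal1_cons_sub_le (j : Fin d) [Fintype (A j)]
    (D : Multiset (∀ i, A i)) (x : ∀ i, A i) (v : A j → ℝ) :
    |(∑ a, |marginal1 j (x ::ₘ D) a - v a|) - (∑ a, |marginal1 j D a - v a|)| ≤ 1 := by
  refine (abs_sum_abs_sub_sub_sum_abs_sub_le _ _ _ v).trans_eq ?_
  simp [marginal1_cons, apply_ite abs]

end Marginals

theorem augflaim_utility_sensitivity_general {d : ℕ} {A : Fin d → Type*} [∀ i, Fintype (A i)]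
    [∀ i, DecidableEq (A i)] {Q : Type*} [Fintype Q] [Nonempty Q]
    (qs : Q → Finset (Fin d))
    (w : Q → ℝ) (hw : ∀ q, 0 ≤ w q) (c : Q → ℝ)
    (Mhat : ∀ q : Q, (∀ i : {i // i ∈ qs q}, A i.1) → ℝ)
    (m : ∀ j : Fin d, A j → ℝ)
    (τ : Q → Multiset (∀ i, A i) → ℝ)
    (hτ : ∀ q D, τ q D =
      ((qs q).card : ℝ)⁻¹ * ∑ j ∈ qs q, ∑ a : A j, |marginal1 j D a - m j a|)
    (u : Q → Multiset (∀ i, A i) → ℝ)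
    (hu : ∀ q D, u q D =
      w q * ((∑ a : ∀ i : {i // i ∈ qs q}, A i.1, |marginal (qs q) D a - Mhat q a|)
        - c q - τ q D)) :
    ∀ (D : Multiset (∀ i, A i)) (x : ∀ i, A i) (q : Q),
      |u q (x ::ₘ D) - u q D| ≤ 2 * Finset.univ.sup' Finset.univ_nonempty w := by
  intro D x q
  have hdist := abs_sum_abs_marginal_cons_sub_le (qs q) D x (Mhat q)
  have hτ_le : |τ q (x ::ₘ D) - τ q D| ≤ 1 := by
    rw [hτ, hτ]
    exact abs_inv_card_mul_sum_sub_le _ zero_le_one fun j _ =>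
      abs_sum_abs_marginal1_cons_sub_le j D x (m j)
  have hw_le : w q ≤ univ.sup' univ_nonempty w := le_sup' w (mem_univ q)
  calc |u q (x ::ₘ D) - u q D|
      = w q * |(∑ a, |marginal (qs q) (x ::ₘ D) a - Mhat q a| -
          ∑ a, |marginal (qs q) D a - Mhat q a|) - (τ q (x ::ₘ D) - τ q D)| := by
        rw [hu, hu, ← mul_sub, abs_mul, abs_of_nonneg (hw q)]
        ring_nf
    _ ≤ w q * 2 := by
        gcongr
        · exact hw q
        · exact ((abs_sub _ _).trans (add_le_add hdist hτ_le)).trans_eq one_add_one_eq_two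
    _ ≤ 2 * univ.sup' univ_nonempty w := by linarith

/-- The augmented FLAIM utility score
`u(q;D_k) = w_q·(‖M_q(D_k) − M_q(D̂)‖₁ − c_q − τ̃_k(q))`, where
`τ̃_k(q) = (1/|q|)·Σ_{j∈q} ‖M_{{j}}(D_k) − m_j‖₁` for fixed vectors `m_j` and fixed
reference marginals `Mhat`, has L1 sensitivity at most `2·max_q w_q` with respect to
example-level changes (addition/removal of one record) in the client dataset. -/
theorem augflaim_utility_sensitivity {d : ℕ} {A : Fin d → Type*} [∀ i, Fintype (A i)]
    [∀ i, DecidableEq (A i)] {Q : Type*} [Fintype Q] [Nonempty Q]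
    (qs : Q → Finset (Fin d)) (hqs : ∀ q, (qs q).Nonempty)
    (w : Q → ℝ) (hw : ∀ q, 0 ≤ w q) (c : Q → ℝ)
    (Mhat : ∀ q : Q, (∀ i : {i // i ∈ qs q}, A i.1) → ℝ)
    (m : ∀ j : Fin d, A j → ℝ)
    (τ : Q → Multiset (∀ i, A i) → ℝ)
    (hτ : ∀ q D, τ q D =
      ((qs q).card : ℝ)⁻¹ * ∑ j ∈ qs q, ∑ a : A j, |marginal1 j D a - m j a|)
    (u : Q → Multiset (∀ i, A i) → ℝ)
    (hu : ∀ q D, u q D =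
      w q * ((∑ a : ∀ i : {i // i ∈ qs q}, A i.1, |marginal (qs q) D a - Mhat q a|)
        - c q - τ q D)) :
    ∀ (D : Multiset (∀ i, A i)) (x : ∀ i, A i) (q : Q),
      |u q (x ::ₘ D) - u q D| ≤ 2 * Finset.univ.sup' Finset.univ_nonempty w :=
  augflaim_utility_sensitivity_general qs w hw c Mhat m τ hτ u hu
end
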